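/- Fix k, m ∈ ℕ, ε₁, ε₂ ∈ {−1, 1}, and an invertible k×k real matrix A. Let E_B = E₁(ε₁)·E₂(ε₂) be the product of the 4×4 matrices E₁(ε₁) = (1/2)·[[1+ε₁, 1−ε₁, 0, 0], [−1+ε₁, 1+ε₁, 0, 0], [0, 0, 1+ε₁, 1−ε₁], [0, 0, −1+ε₁, 1+ε₁]] and E₂(ε₂) = (1/2)·[[1+ε₂, 0, 1−ε₂, 0], [0, 1+ε₂, 0, 1−ε₂], [1−ε₂, 0, 1+ε₂, 0], [0, 1−ε₂, 0, 1+ε₂]]. Define η : ℝ⁴ × ℂ^m × ℝ^k × ℝ^k → ℝ⁴ × ℂ^m × ℝ^k × ℝ^k by η(x, w, θ, I) = (E_B·x, w, (A⁻¹)ᵀ·θ, A·I). Then: (1) η is a linear symplectomorphism for ω = Ω ⊕ (⊕_{j=1}^m ω̃^e) ⊕ ω^x, i.e. ω(η(u), η(v)) = ω(u, v) for all u, v; (2) q₁(E_B·x) = ε₁·q₁(x) and q₂(E_B·x) = ε₂·q₂(x) for all x ∈ ℝ⁴; (3) |w_j|² is unchanged for each j; (4) the last component transforms linearly by A. -/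
import Mathlib


open scoped BigOperators

/-- The matrix `E₁(ε)` realizing the sign change `q₁ ↦ ε q₁`. -/
noncomputable def E1 (ε : ℝ) : Matrix (Fin 4) (Fin 4) ℝ :=
  (1 / 2 : ℝ) • Matrix.of
    ![![1 + ε, 1 - ε, 0, 0],
      ![-1 + ε, 1 + ε, 0, 0],
      ![0, 0, 1 + ε, 1 - ε],
      ![0, 0, -1 + ε, 1 + ε]]

/-- The matrix `E₂(ε)` realizing the sign change `q₂ ↦ ε q₂`. -/
noncomputable def E2 (ε : ℝ) : Matrix (Fin 4) (Fin 4) ℝ :=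
  (1 / 2 : ℝ) • Matrix.of
    ![![1 + ε, 0, 1 - ε, 0],
      ![0, 1 + ε, 0, 1 - ε],
      ![1 - ε, 0, 1 + ε, 0],
      ![0, 1 - ε, 0, 1 + ε]]

/-- The standard symplectic bilinear form on `ℝ⁴` with coordinates `(x₁, ξ₁, x₂, ξ₂)`. -/
def Omega4 (u v : Fin 4 → ℝ) : ℝ :=
  u 0 * v 1 - u 1 * v 0 + u 2 * v 3 - u 3 * v 2

/-- The focus-focus component `q₁ = x₁ ξ₁ + x₂ ξ₂` on `ℝ⁴`. -/
def q1R4 (v : Fin 4 → ℝ) : ℝ := v 0 * v 1 + v 2 * v 3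

/-- The focus-focus component `q₂ = x₁ ξ₂ − x₂ ξ₁` on `ℝ⁴`. -/
def q2R4 (v : Fin 4 → ℝ) : ℝ := v 0 * v 3 - v 2 * v 1

/-- The phase space `ℝ⁴ × ℂ^m × ℝ^k × ℝ^k`. -/
abbrev EtaSpace (k m : ℕ) :=
  (Fin 4 → ℝ) × (Fin m → ℂ) × (Fin k → ℝ) × (Fin k → ℝ)

/-- The symplectic bilinear form `ω = Ω ⊕ (⊕ⱼ ω̃^e) ⊕ ω^x` on `ℝ⁴ × ℂ^m × ℝ^k × ℝ^k`. -/
noncomputable def omegaEta (k m : ℕ) (u v : EtaSpace k m) : ℝ :=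
  Omega4 u.1 v.1 +
    (∑ j, 2 * (u.2.1 j * (starRingEnd ℂ) (v.2.1 j)).im) +
    ((∑ j, u.2.2.1 j * v.2.2.2 j) - (∑ j, v.2.2.1 j * u.2.2.2 j))

/-- The map `η_B` of the paper, with `Xˣ = A`:
`η(x, w, θ, I) = (E_B x, w, (A⁻¹)ᵀ θ, A I)` where `E_B = E₁(ε₁) E₂(ε₂)`. -/
noncomputable def etaB (k m : ℕ) (ε₁ ε₂ : ℝ) (A : Matrix (Fin k) (Fin k) ℝ) :
    EtaSpace k m → EtaSpace k m :=
  fun p =>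
    ((E1 ε₁ * E2 ε₂).mulVec p.1, p.2.1,
     (A⁻¹).transpose.mulVec p.2.2.1, A.mulVec p.2.2.2)

theorem etaB_symplecto_sign_change (k m : ℕ) (ε₁ ε₂ : ℝ)
    (hε₁ : ε₁ = -1 ∨ ε₁ = 1) (hε₂ : ε₂ = -1 ∨ ε₂ = 1)
    (A : Matrix (Fin k) (Fin k) ℝ) (hA : IsUnit A) :
    (∀ u v : EtaSpace k m,
      omegaEta k m (etaB k m ε₁ ε₂ A u) (etaB k m ε₁ ε₂ A v) = omegaEta k m u v) ∧
    (∀ x : Fin 4 → ℝ,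
      q1R4 ((E1 ε₁ * E2 ε₂).mulVec x) = ε₁ * q1R4 x ∧
      q2R4 ((E1 ε₁ * E2 ε₂).mulVec x) = ε₂ * q2R4 x) ∧
    (∀ p : EtaSpace k m, (etaB k m ε₁ ε₂ A p).2.1 = p.2.1) ∧
    (∀ p : EtaSpace k m, (etaB k m ε₁ ε₂ A p).2.2.2 = A.mulVec p.2.2.2) := by

  have hdot : ∀ (θ I : Fin k → ℝ),
      dotProduct ((A⁻¹).transpose.mulVec θ) (A.mulVec I) = dotProduct θ I := by
    intro θ I
    rw [Matrix.mulVec_transpose, ← Matrix.dotProduct_mulVec, Matrix.mulVec_mulVec,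
      Matrix.nonsing_inv_mul A ((Matrix.isUnit_iff_isUnit_det A).mp hA), Matrix.one_mulVec]
  have hOmega : ∀ u v : Fin 4 → ℝ,
      Omega4 ((E1 ε₁ * E2 ε₂).mulVec u) ((E1 ε₁ * E2 ε₂).mulVec v) = Omega4 u v := by
    intro u v
    rcases hε₁ with h1 | h1 <;> rcases hε₂ with h2 | h2 <;> subst h1 <;> subst h2 <;>
      simp [E1, E2, Matrix.mulVec, dotProduct, Matrix.mul_apply, Omega4,
        Fin.sum_univ_four, Matrix.smul_apply] <;> ring
  refine ⟨?_, ?_, fun p => rfl, fun p => rfl⟩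
  · intro u v
    unfold omegaEta etaB
    rw [hOmega]
    have h1 := hdot u.2.2.1 v.2.2.2
    have h2 := hdot v.2.2.1 u.2.2.2
    simp only [dotProduct] at h1 h2
    rw [h1, h2]
  · intro x
    rcases hε₁ with h1 | h1 <;> rcases hε₂ with h2 | h2 <;> subst h1 <;> subst h2 <;>
      constructor <;>
      simp [E1, E2, Matrix.mulVec, dotProduct, Matrix.mul_apply, q1R4, q2R4,
        Fin.sum_univ_four, Matrix.smul_apply] <;> ring
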